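/- arXiv:2108.07446 — 3 statements merged into one kernel-verified Lean document; each statement's English description precedes it below -/
import Mathlib

section
/- For any finite simple undirected graph G on N nodes, the sum over edges e of |A_e|^2 is bounded above and below by constant multiples of the sum over nodes i of |G_i|^3, where G_i is the set of edges incident to node i and A_e = G_{e^+} ∪ G_{e^-} for an edge e = (e^+, e^-). In particular, ∑_{e∈G} |A_e|^2 ≍ ∑_{i=1}^N |G_i|^3. -/
/-!
Double counting the incidences `v ∈ e` gives `∑ᵢ dᵢ³ = ∑_{e = uv} (d_u² + d_v²)`.
Since `A_{uv} = G_u ∪ G_v`, we have `max d_u d_v ≤ |A_{uv}| ≤ d_u + d_v`, so each `|A_{uv}|²`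
lies between `(d_u² + d_v²) / 2` and `2 (d_u² + d_v²)`; summing over the edges gives the
theorem with `c = 1/2` and `C = 2`.
-/

open Finset SimpleGraph

/-- `Ae G e`: the set of edges of `G` sharing at least one node with the edge `e`
(this is `G_{e⁺} ∪ G_{e⁻}`, and it contains `e` itself). -/
def Ae {N : ℕ} (G : SimpleGraph (Fin N)) [DecidableRel G.Adj] (e : Sym2 (Fin N)) :
    Finset (Sym2 (Fin N)) :=
  G.edgeFinset.filter fun f => ∃ v, v ∈ e ∧ v ∈ f

namespace SimpleGraph

variable {V : Type*} [Fintype V] [DecidableEq V] (G : SimpleGraph V) [DecidableRel G.Adj]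

theorem sum_edgeFinset_sum_toFinset {M : Type*} [AddCommMonoid M] (f : V → M) :
    ∑ e ∈ G.edgeFinset, ∑ v ∈ e.toFinset, f v = ∑ v, G.degree v • f v := by
  rw [Finset.sum_comm' (t' := univ) (s' := fun v => G.incidenceFinset v)]
  · simp only [sum_const, card_incidenceFinset_eq_degree]
  · intro e v
    simp [incidenceFinset_eq_filter, and_comm]

theorem sum_degree_pow_succ_eq_sum_edgeFinset {R : Type*} [CommSemiring R] (k : ℕ) :
    ∑ v, (G.degree v : R) ^ (k + 1) =
      ∑ e ∈ G.edgeFinset, ∑ v ∈ e.toFinset, (G.degree v : R) ^ k := by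
  simp only [sum_edgeFinset_sum_toFinset, nsmul_eq_mul, pow_succ']

end SimpleGraph

section Ae

variable {N : ℕ} (G : SimpleGraph (Fin N)) [DecidableRel G.Adj]

theorem Ae_mk (u v : Fin N) : Ae G s(u, v) = G.incidenceFinset u ∪ G.incidenceFinset v := by
  ext f
  simp [Ae, incidenceFinset_eq_filter, or_and_right, exists_or, and_or_left]

theorem sum_sq_degree_le_two_mul_sq_card_Ae {e : Sym2 (Fin N)} (he : e ∈ G.edgeFinset) :
    ∑ v ∈ e.toFinset, (G.degree v : ℝ) ^ 2 ≤ 2 * (#(Ae G e) : ℝ) ^ 2 := by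
  induction e using Sym2.ind with
  | _ u v =>
    have hne : u ≠ v := (mem_edgeFinset.mp he).ne
    have hu : (G.degree u : ℝ) ≤ #(Ae G s(u, v)) := by
      rw [Ae_mk, ← card_incidenceFinset_eq_degree]
      exact_mod_cast card_le_card subset_union_left
    have hv : (G.degree v : ℝ) ≤ #(Ae G s(u, v)) := by
      rw [Ae_mk, ← card_incidenceFinset_eq_degree]
      exact_mod_cast card_le_card subset_union_right
    rw [Sym2.toFinset_mk_eq, sum_pair hne, two_mul]
    gcongr

theorem sq_card_Ae_le_two_mul_sum_sq_degree {e : Sym2 (Fin N)} (he : e ∈ G.edgeFinset) :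
    (#(Ae G e) : ℝ) ^ 2 ≤ 2 * ∑ v ∈ e.toFinset, (G.degree v : ℝ) ^ 2 := by
  induction e using Sym2.ind with
  | _ u v =>
    have hne : u ≠ v := (mem_edgeFinset.mp he).ne
    have hcard : (#(Ae G s(u, v)) : ℝ) ≤ G.degree u + G.degree v := by
      rw [Ae_mk, ← card_incidenceFinset_eq_degree, ← card_incidenceFinset_eq_degree]
      exact_mod_cast card_union_le _ _
    rw [Sym2.toFinset_mk_eq, sum_pair hne]
    calc (#(Ae G s(u, v)) : ℝ) ^ 2 ≤ ((G.degree u : ℝ) + G.degree v) ^ 2 := by gcongr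
      _ ≤ 2 * ((G.degree u : ℝ) ^ 2 + (G.degree v : ℝ) ^ 2) := add_sq_le

end Ae

/-- there are universal constants `0 < c ≤ C` such that for every finite
simple graph, `c ∑_i |G_i|³ ≤ ∑_{e∈G} |A_e|² ≤ C ∑_i |G_i|³`. -/
theorem sum_Ae_sq_asymp_sum_deg_cube :
    ∃ c C : ℝ, 0 < c ∧ c ≤ C ∧
      ∀ (N : ℕ) (G : SimpleGraph (Fin N)) [DecidableRel G.Adj],
        c * ∑ i : Fin N, (G.degree i : ℝ) ^ 3 ≤
            ∑ e ∈ G.edgeFinset, ((Ae G e).card : ℝ) ^ 2 ∧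
        ∑ e ∈ G.edgeFinset, ((Ae G e).card : ℝ) ^ 2 ≤
            C * ∑ i : Fin N, (G.degree i : ℝ) ^ 3 := by
  refine ⟨1 / 2, 2, by norm_num, by norm_num, fun N G _ => ?_⟩
  rw [G.sum_degree_pow_succ_eq_sum_edgeFinset 2, mul_sum, mul_sum]
  constructor
  · refine sum_le_sum fun e he => ?_
    linarith [sum_sq_degree_le_two_mul_sq_card_Ae G he]
  · exact sum_le_sum fun e he => sq_card_Ae_le_two_mul_sum_sq_degree G he
end

section
/- For any finite simple undirected graph G on N nodes, ∑_{i=1}^N ∑_{j,k ∈ node_{G_i}, j≠k} d̃_j d̃_k ≤ C ( ∑_{i=1}^N |G_{i,2}|^2 + (|G|^2/N^2) ∑_{i=1}^N |G_i|^2 ) for a universal constant C, where d̃_i = |G_i| − 2|G|/N is the centered degree. -/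
open Finset SimpleGraph

/-- `Gi2 G i`: the set of edges of `G` with at least one endpoint in the
neighborhood `node_{G_i}` of node `i`. -/
def Gi2 {N : ℕ} (G : SimpleGraph (Fin N)) [DecidableRel G.Adj] (i : Fin N) :
    Finset (Sym2 (Fin N)) :=
  G.edgeFinset.filter fun f => ∃ v : Fin N, v ∈ f ∧ G.Adj i v

/-- `ctrDeg G i`: the centered degree `d̃_i = |G_i| - 2|G|/N`. -/
noncomputable def ctrDeg {N : ℕ} (G : SimpleGraph (Fin N)) [DecidableRel G.Adj]
    (i : Fin N) : ℝ :=
  (G.degree i : ℝ) - 2 * (G.edgeFinset.card : ℝ) / N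

/-!
For each vertex `i`, the sum over ordered pairs of distinct neighbours is at most
`(∑_{j ∼ i} d̃_j)²`, and `∑_{j ∼ i} d̃_j = ∑_{j ∼ i} |G_j| - |G_i| · 2|G|/N`. Each edge meeting
`node_{G_i}` is counted at most twice in `∑_{j ∼ i} |G_j|`, so this sum is at most `2 |G_{i,2}|`.
Both terms being nonnegative, the square is at most `4 |G_{i,2}|² + 4 |G|² |G_i|² / N²`;
summing over `i` gives the claim with `C = 4`.
-/

theorem Finset.sum_sum_sdiff_singleton_mul {α R : Type*} [DecidableEq α] [CommRing R]
    (s : Finset α) (f : α → R) :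
    ∑ j ∈ s, ∑ k ∈ s \ {j}, f j * f k = (∑ j ∈ s, f j) ^ 2 - ∑ j ∈ s, f j ^ 2 := by
  have hrow : ∀ j ∈ s, ∑ k ∈ s \ {j}, f j * f k = f j * ∑ k ∈ s, f k - f j ^ 2 := by
    intro j hj
    rw [← mul_sum, sum_sdiff_eq_sub (singleton_subset_iff.2 hj), sum_singleton]
    ring
  rw [sum_congr rfl hrow, sum_sub_distrib, ← sum_mul, sq]

theorem Finset.sum_sum_sdiff_singleton_mul_le_sq {α R : Type*} [DecidableEq α] [CommRing R]
    [LinearOrder R] [IsStrictOrderedRing R] (s : Finset α) (f : α → R) :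
    ∑ j ∈ s, ∑ k ∈ s \ {j}, f j * f k ≤ (∑ j ∈ s, f j) ^ 2 := by
  rw [sum_sum_sdiff_singleton_mul, sub_le_self_iff]
  exact sum_nonneg fun j _ => sq_nonneg (f j)

namespace SimpleGraph

variable {V : Type*} [Fintype V] [DecidableEq V] (G : SimpleGraph V) [DecidableRel G.Adj]

/-- Double counting: an edge is incident to at most two vertices of `s`. -/
theorem sum_degree_le_two_mul_card_of_incidenceFinset_subset {s : Finset V} {T : Finset (Sym2 V)}
    (hT : ∀ j ∈ s, G.incidenceFinset j ⊆ T) : ∑ j ∈ s, G.degree j ≤ 2 * #T := by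
  have hbelow : ∀ e ∈ T, #(s.bipartiteBelow (fun j e => j ∈ e) e) ≤ 2 := by
    intro e _
    calc #(s.bipartiteBelow (fun j e => j ∈ e) e) ≤ #e.toFinset :=
          card_le_card fun j hj => Sym2.mem_toFinset.2 ((mem_bipartiteBelow _).1 hj).2
      _ ≤ 2 := by rw [Sym2.card_toFinset]; split_ifs <;> norm_num
  calc ∑ j ∈ s, G.degree j ≤ ∑ j ∈ s, #(T.bipartiteAbove (fun j e => j ∈ e) j) :=
        sum_le_sum fun j hj => by
          rw [← card_incidenceFinset_eq_degree]
          exact card_le_card fun e he => (mem_bipartiteAbove _).2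
            ⟨hT j hj he, ((G.mem_incidenceFinset j e).1 he).2⟩
    _ = ∑ e ∈ T, #(s.bipartiteBelow (fun j e => j ∈ e) e) :=
        sum_card_bipartiteAbove_eq_sum_card_bipartiteBelow _
    _ ≤ ∑ _e ∈ T, 2 := sum_le_sum hbelow
    _ = 2 * #T := by rw [sum_const, smul_eq_mul, mul_comm]

end SimpleGraph

theorem incidenceFinset_subset_Gi2 {N : ℕ} (G : SimpleGraph (Fin N)) [DecidableRel G.Adj]
    {i j : Fin N} (hij : G.Adj i j) : G.incidenceFinset j ⊆ Gi2 G i := fun e he =>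
  have he' := (G.mem_incidenceFinset j e).1 he
  mem_filter.2 ⟨G.mem_edgeFinset.2 he'.1, j, he'.2, hij⟩

theorem sum_neighborFinset_ctrDeg {N : ℕ} (G : SimpleGraph (Fin N)) [DecidableRel G.Adj]
    (i : Fin N) :
    ∑ j ∈ G.neighborFinset i, ctrDeg G j =
      ∑ j ∈ G.neighborFinset i, (G.degree j : ℝ) -
        G.degree i * (2 * #G.edgeFinset / N) := by
  simp only [ctrDeg, sum_sub_distrib, sum_const, card_neighborFinset_eq_degree, nsmul_eq_mul]

theorem sq_sum_neighborFinset_ctrDeg_le {N : ℕ} (G : SimpleGraph (Fin N)) [DecidableRel G.Adj]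
    (i : Fin N) :
    (∑ j ∈ G.neighborFinset i, ctrDeg G j) ^ 2 ≤
      4 * (#(Gi2 G i) : ℝ) ^ 2 + 4 * ((#G.edgeFinset : ℝ) ^ 2 / N ^ 2 * G.degree i ^ 2) := by
  have hag : ∑ j ∈ G.neighborFinset i, (G.degree j : ℝ) ≤ 2 * #(Gi2 G i) := by
    exact_mod_cast G.sum_degree_le_two_mul_card_of_incidenceFinset_subset fun j hj =>
      incidenceFinset_subset_Gi2 G ((G.mem_neighborFinset i j).1 hj)
  set a := ∑ j ∈ G.neighborFinset i, (G.degree j : ℝ)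
  set b := (G.degree i : ℝ) * (2 * #G.edgeFinset / N)
  have ha : 0 ≤ a := sum_nonneg fun j _ => Nat.cast_nonneg _
  have hb : 0 ≤ b := by positivity
  have hb2 : b ^ 2 = 4 * ((#G.edgeFinset : ℝ) ^ 2 / N ^ 2 * G.degree i ^ 2) := by
    simp only [b]; ring
  rw [sum_neighborFinset_ctrDeg, ← hb2]
  -- `(a - b)² ≤ a² + b²` because `ab ≥ 0`
  nlinarith

/-- there is a universal constant `C > 0` such that for every finite simple
graph on `N` nodes,
`∑_i ∑_{j,k ∈ node_{G_i}, j≠k} d̃_j d̃_k ≤ C (∑_i |G_{i,2}|² + (|G|²/N²) ∑_i |G_i|²)`. -/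
theorem sum_ctrDeg_pairs_le :
    ∃ C : ℝ, 0 < C ∧
      ∀ (N : ℕ) (G : SimpleGraph (Fin N)) [DecidableRel G.Adj],
        (∑ i : Fin N, ∑ j ∈ G.neighborFinset i, ∑ k ∈ G.neighborFinset i \ {j},
            ctrDeg G j * ctrDeg G k) ≤
          C * (∑ i : Fin N, ((Gi2 G i).card : ℝ) ^ 2 +
            ((G.edgeFinset.card : ℝ) ^ 2 / (N : ℝ) ^ 2) *
              ∑ i : Fin N, (G.degree i : ℝ) ^ 2) := by
  refine ⟨4, by norm_num, fun N G _ => ?_⟩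
  calc (∑ i, ∑ j ∈ G.neighborFinset i, ∑ k ∈ G.neighborFinset i \ {j}, ctrDeg G j * ctrDeg G k)
      ≤ ∑ i, (∑ j ∈ G.neighborFinset i, ctrDeg G j) ^ 2 :=
        sum_le_sum fun i _ => sum_sum_sdiff_singleton_mul_le_sq _ _
    _ ≤ ∑ i, (4 * (#(Gi2 G i) : ℝ) ^ 2 +
          4 * ((#G.edgeFinset : ℝ) ^ 2 / N ^ 2 * G.degree i ^ 2)) :=
        sum_le_sum fun i _ => sq_sum_neighborFinset_ctrDeg_le G i
    _ = _ := by
        simp only [sum_add_distrib, ← mul_sum]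
        ring
end

section
/- Under the bootstrap null distribution with each node independently in sample X with probability p, the covariance of R_2 (edges with both endpoints outside sample X) and n_X (number of nodes in sample X) is Cov(R_2, n_X) = −2|G| p q^2, where q = 1 − p. -/
open Finset SimpleGraph

/-- Expectation under the bootstrap null distribution: each of the `N` nodes is
independently assigned to sample X (`σ i = true`) with probability `p`. -/
noncomputable def bootExp (N : ℕ) (p : ℝ) (f : (Fin N → Bool) → ℝ) : ℝ :=
  ∑ σ : Fin N → Bool, (∏ i : Fin N, if σ i then p else 1 - p) * f σ

/-- `R2boot G σ`: number of edges of `G` with both endpoints outside sample X. -/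
def R2boot {N : ℕ} (G : SimpleGraph (Fin N)) [DecidableRel G.Adj] (σ : Fin N → Bool) : ℕ :=
  (G.edgeFinset.filter fun e => ∀ v : Fin N, v ∈ e → σ v = false).card

/-- `nX σ`: number of nodes assigned to sample X. -/
def nX {N : ℕ} (σ : Fin N → Bool) : ℕ :=
  (Finset.univ.filter fun i : Fin N => σ i = true).card

/-! Both `R₂` and `n_X` are sums of indicators, so their covariance is the double sum, over
edges `e` and nodes `j`, of the covariances of `[e ∩ X = ∅]` and `[j ∈ X]`. When `j ∉ e` the two
indicators depend on disjoint sets of independent coordinates and the covariance vanishes; when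
`j ∈ e` their product is zero, leaving `-q² p`. Each edge has two endpoints. -/

section Bootstrap

variable {N : ℕ} {p : ℝ}

lemma bootExp_sum {ι : Type*} (s : Finset ι) (f : ι → (Fin N → Bool) → ℝ) :
    bootExp N p (fun σ => ∑ a ∈ s, f a σ) = ∑ a ∈ s, bootExp N p (f a) := by
  simp only [bootExp, mul_sum]
  exact sum_comm

lemma bootExp_prod (g : Fin N → Bool → ℝ) :
    bootExp N p (fun σ => ∏ i, g i (σ i)) = ∏ i, (p * g i true + (1 - p) * g i false) := by
  simp only [bootExp, ← prod_mul_distrib]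
  rw [← Fintype.prod_sum fun i (b : Bool) => (if b then p else 1 - p) * g i b]
  simp

lemma bootExp_cylinder (s : Finset (Fin N)) (τ : Fin N → Bool) :
    bootExp N p (fun σ => if ∀ i ∈ s, σ i = τ i then 1 else 0) =
      ∏ i ∈ s, if τ i then p else 1 - p := by
  have hprod : (fun σ : Fin N → Bool => if ∀ i ∈ s, σ i = τ i then (1 : ℝ) else 0) =
      fun σ => ∏ i, if i ∈ s then (if σ i = τ i then 1 else 0) else 1 := by
    ext σ
    rw [Fintype.prod_ite_mem, prod_boole]
    congr
  rw [hprod, bootExp_prod fun i b => if i ∈ s then (if b = τ i then 1 else 0) else 1]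
  rw [← Fintype.prod_ite_mem s]
  refine prod_congr rfl fun i _ => ?_
  by_cases hi : i ∈ s <;> cases τ i <;> simp [hi]

noncomputable def bootCov (N : ℕ) (p : ℝ) (f g : (Fin N → Bool) → ℝ) : ℝ :=
  bootExp N p (fun σ => f σ * g σ) - bootExp N p f * bootExp N p g

lemma bootCov_sum_left {ι : Type*} (s : Finset ι) (f : ι → (Fin N → Bool) → ℝ)
    (g : (Fin N → Bool) → ℝ) :
    bootCov N p (fun σ => ∑ a ∈ s, f a σ) g = ∑ a ∈ s, bootCov N p (f a) g := by
  simp only [bootCov, sum_mul, bootExp_sum, sum_sub_distrib]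

lemma bootCov_sum_right {ι : Type*} (s : Finset ι) (f : (Fin N → Bool) → ℝ)
    (g : ι → (Fin N → Bool) → ℝ) :
    bootCov N p f (fun σ => ∑ a ∈ s, g a σ) = ∑ a ∈ s, bootCov N p f (g a) := by
  simp only [bootCov, mul_sum, bootExp_sum, sum_sub_distrib]

lemma bootExp_allFalse_mul_node (s : Finset (Fin N)) (j : Fin N) :
    bootExp N p (fun σ => (if ∀ i ∈ s, σ i = false then 1 else 0) *
        (if σ j = true then 1 else 0)) =
      if j ∈ s then 0 else p * (1 - p) ^ #s := by
  split_ifs with hj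
  · have hzero : ∀ σ : Fin N → Bool, (if ∀ i ∈ s, σ i = false then (1 : ℝ) else 0) *
        (if σ j = true then 1 else 0) = 0 := by
      intro σ
      by_cases h : ∀ i ∈ s, σ i = false
      · simp [h j hj]
      · simp [h]
    simp [bootExp, hzero]
  · have hjoint : ∀ σ : Fin N → Bool, (if ∀ i ∈ s, σ i = false then (1 : ℝ) else 0) *
        (if σ j = true then 1 else 0) =
        if ∀ i ∈ insert j s, σ i = decide (i = j) then 1 else 0 := by
      intro σ
      rw [ite_zero_mul_ite_zero, one_mul]
      refine if_congr ?_ rfl rfl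
      simp only [forall_mem_insert, decide_true]
      refine and_comm.trans (and_congr_right fun _ => forall₂_congr fun i hi => ?_)
      rw [decide_eq_false (ne_of_mem_of_not_mem hi hj)]
    simp only [hjoint, bootExp_cylinder, prod_insert hj, decide_true, if_true]
    rw [prod_congr rfl fun i hi => by rw [decide_eq_false (ne_of_mem_of_not_mem hi hj)],
      prod_const]
    rfl

lemma bootCov_allFalse_node (s : Finset (Fin N)) (j : Fin N) :
    bootCov N p (fun σ => if ∀ i ∈ s, σ i = false then 1 else 0)
        (fun σ => if σ j = true then 1 else 0) =
      if j ∈ s then -(p * (1 - p) ^ #s) else 0 := by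
  have hnode : bootExp N p (fun σ => if σ j = true then 1 else 0) = p := by
    simpa using bootExp_cylinder (p := p) {j} fun _ => true
  have hset : bootExp N p (fun σ => if ∀ i ∈ s, σ i = false then 1 else 0) = (1 - p) ^ #s := by
    simpa using bootExp_cylinder (p := p) s fun _ => false
  simp only [bootCov, bootExp_allFalse_mul_node, hnode, hset]
  split_ifs <;> ring

lemma bootCov_allFalse_nX (s : Finset (Fin N)) :
    bootCov N p (fun σ => if ∀ i ∈ s, σ i = false then 1 else 0) (fun σ => (nX σ : ℝ)) =
      -(#s * p * (1 - p) ^ #s) := by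
  have hnX : (fun σ : Fin N → Bool => (nX σ : ℝ)) =
      fun σ => ∑ j, if σ j = true then 1 else 0 := by
    ext σ
    simp [nX, sum_boole]
  rw [hnX, bootCov_sum_right]
  simp only [bootCov_allFalse_node, Fintype.sum_ite_mem, sum_neg_distrib, sum_const,
    nsmul_eq_mul]
  ring

end Bootstrap

theorem boot_cov_R2_nX_general (N : ℕ) (G : SimpleGraph (Fin N)) [DecidableRel G.Adj]
    (p : ℝ) :
    bootExp N p (fun σ => (R2boot G σ : ℝ) * (nX σ : ℝ)) -
        bootExp N p (fun σ => (R2boot G σ : ℝ)) * bootExp N p (fun σ => (nX σ : ℝ)) =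
      -(2 * (G.edgeFinset.card : ℝ) * p * (1 - p) ^ 2) := by
  have hR2 : (fun σ => (R2boot G σ : ℝ)) =
      fun σ => ∑ e ∈ G.edgeFinset, if ∀ v ∈ e.toFinset, σ v = false then 1 else 0 := by
    ext σ
    simp [R2boot, sum_boole]
  change bootCov N p (fun σ => (R2boot G σ : ℝ)) (fun σ => (nX σ : ℝ)) = _
  rw [hR2, bootCov_sum_left]
  have hedge : ∀ e ∈ G.edgeFinset, #e.toFinset = 2 := fun e he =>
    Sym2.card_toFinset_of_not_isDiag e (G.not_isDiag_of_mem_edgeSet (mem_edgeFinset.1 he))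
  rw [sum_congr rfl fun e he => by rw [bootCov_allFalse_nX, hedge e he]]
  simp only [Nat.cast_ofNat, sum_neg_distrib, sum_const, nsmul_eq_mul]
  ring

/-- under the bootstrap null distribution,
`Cov(R_2, n_X) = -2 |G| p q²` with `q = 1 - p`. -/
theorem boot_cov_R2_nX (N : ℕ) (G : SimpleGraph (Fin N)) [DecidableRel G.Adj]
    (p : ℝ) (hp0 : 0 ≤ p) (hp1 : p ≤ 1) :
    bootExp N p (fun σ => (R2boot G σ : ℝ) * (nX σ : ℝ)) -
        bootExp N p (fun σ => (R2boot G σ : ℝ)) * bootExp N p (fun σ => (nX σ : ℝ)) =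
      -(2 * (G.edgeFinset.card : ℝ) * p * (1 - p) ^ 2) :=
  boot_cov_R2_nX_general N G p
end
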